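/- arXiv:2311.08725 — 7 statements merged into one kernel-verified Lean document; each statement's English description precedes it below -/
import Mathlib

section
/- Let G₁,…,G_k be generating functions on Δ_n, C_i = G_i*, and C = ⋀_i C_i. Suppose the market state q¹,…,q^k ∈ ℝⁿ is coherent in the sense that, with q = Σ_i qⁱ, one has C(q) = Σ_i C_i(qⁱ). If r¹,…,r^k ∈ ℝⁿ satisfy C_i(qⁱ + rⁱ) = C_i(qⁱ) for every i, then with r = Σ_i rⁱ one has C(q + r) ≤ C(q). -/
open scoped BigOperators

noncomputable section

/-- Dot product on `ℝⁿ`. -/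
def dotp {n : ℕ} (x y : Fin n → ℝ) : ℝ := ∑ i, x i * y i

/-- Convex conjugate `f*(x*) = sup_x ⟨x*, x⟩ − f(x)`. -/
def conj {n : ℕ} (f : (Fin n → ℝ) → EReal) (y : Fin n → ℝ) : EReal :=
  ⨆ x : Fin n → ℝ, ((dotp y x : ℝ) : EReal) - f x

/-- Subdifferential `∂f(x) = {x* : ∀ x', f(x') − f(x) ≥ ⟨x*, x'−x⟩}`. -/
def subdiff {n : ℕ} (f : (Fin n → ℝ) → EReal) (x : Fin n → ℝ) : Set (Fin n → ℝ) :=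
  {y | ∀ x' : Fin n → ℝ, f x' - f x ≥ ((dotp y (x' - x) : ℝ) : EReal)}

/-- Convexity for extended-real-valued functions. -/
def EConvex {n : ℕ} (f : (Fin n → ℝ) → EReal) : Prop :=
  ∀ x y : Fin n → ℝ, ∀ a b : ℝ, 0 ≤ a → 0 ≤ b → a + b = 1 →
    f (a • x + b • y) ≤ (a : EReal) * f x + (b : EReal) * f y

/-- Infimal convolution `(⋀ᵢ fᵢ)(x) = inf {Σᵢ fᵢ(xⁱ) : Σᵢ xⁱ = x}`. -/
def infConv {n k : ℕ} (f : Fin k → (Fin n → ℝ) → EReal) (x : Fin n → ℝ) : EReal :=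
  sInf {s : EReal | ∃ xs : Fin k → Fin n → ℝ, (∑ i, xs i) = x ∧ s = ∑ i, f i (xs i)}

/-- Relative interior of the probability simplex `Δₙ`. -/
def relintSimplex (n : ℕ) : Set (Fin n → ℝ) :=
  {p | (∀ i, 0 < p i) ∧ ∑ i, p i = 1}

/-- ℓ¹ norm on `ℝⁿ`. -/
def l1norm {n : ℕ} (x : Fin n → ℝ) : ℝ := ∑ i, |x i|

/-- 1-homogeneous extension `Ḡ(x) = ‖x‖₁ · G(x/‖x‖₁)`, `Ḡ(0) = 0`
(it takes value `+∞` off `ℝⁿ_{≥0}` since there `x/‖x‖₁ ∉ Δₙ`). -/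
def homExt {n : ℕ} (G : (Fin n → ℝ) → EReal) (x : Fin n → ℝ) : EReal :=
  if x = 0 then 0 else ((l1norm x : ℝ) : EReal) * G ((l1norm x)⁻¹ • x)

/-- A generating function on `Δₙ`: convex and bounded on `Δₙ` (identified with its
extension by `+∞` outside `Δₙ`), whose 1-homogeneous extension has a unique
subgradient at every nonzero `x ∈ ℝⁿ_{≥0}`. -/
def IsGenFn {n : ℕ} (G : (Fin n → ℝ) → EReal) : Prop :=
  (∀ p, G p ≠ ⊥) ∧
  (∀ p, G p ≠ ⊤ ↔ p ∈ stdSimplex ℝ (Fin n)) ∧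
  EConvex G ∧
  (∃ m M : ℝ, ∀ p ∈ stdSimplex ℝ (Fin n), (m : EReal) ≤ G p ∧ G p ≤ (M : EReal)) ∧
  (∀ x : Fin n → ℝ, (∀ i, 0 ≤ x i) → x ≠ 0 → ∃! q, q ∈ subdiff (homExt G) x)

/-- A pseudobarrier: along any sequence of relative-interior prices converging to the
relative boundary of `Δₙ`, any choice of subgradients blows up in norm. -/
def IsPseudobarrier {n : ℕ} (G : (Fin n → ℝ) → EReal) : Prop :=
  ∀ (p : ℕ → Fin n → ℝ) (plim : Fin n → ℝ),
    (∀ j, p j ∈ relintSimplex n) →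
    plim ∈ stdSimplex ℝ (Fin n) \ relintSimplex n →
    Filter.Tendsto p Filter.atTop (nhds plim) →
    ∀ q : ℕ → Fin n → ℝ, (∀ j, q j ∈ subdiff G (p j)) →
      Filter.Tendsto (fun j => ‖q j‖) Filter.atTop Filter.atTop

/-- Given generating functions `G₁,…,G_k`, `Cᵢ = Gᵢ*`, `C = ⋀ᵢ Cᵢ`,
and a coherent state (`C(q) = Σᵢ Cᵢ(qⁱ)` with `q = Σᵢ qⁱ`): if `Cᵢ(qⁱ+rⁱ) = Cᵢ(qⁱ)`
for every `i`, then `C(q + Σᵢ rᵢ) ≤ C(q)`. -/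
theorem statement6 {n k : ℕ} (hk : 0 < k) (G : Fin k → (Fin n → ℝ) → EReal)
    (hG : ∀ i, IsGenFn (G i))
    (qs : Fin k → Fin n → ℝ) (q : Fin n → ℝ) (hq : q = ∑ i, qs i)
    (hcoh : infConv (fun i => conj (G i)) q = ∑ i, conj (G i) (qs i))
    (rs : Fin k → Fin n → ℝ)
    (hrs : ∀ i, conj (G i) (qs i + rs i) = conj (G i) (qs i))
    (r : Fin n → ℝ) (hr : r = ∑ i, rs i) :
    infConv (fun i => conj (G i)) (q + r) ≤ infConv (fun i => conj (G i)) q := by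
  rw [hcoh]
  have h : infConv (fun i => conj (G i)) (q + r) ≤ ∑ i, conj (G i) (qs i + rs i) := by
    apply sInf_le
    exact ⟨fun i => qs i + rs i, by rw [hq, hr]; funext j; simp [Finset.sum_apply, Finset.sum_add_distrib], rfl⟩
  simpa [hrs] using h
end
end

section
/- Let α > 0 and define g : [0,1] → ℝ by g(p) = −2α√(p(1−p)). Then: (i) for every p ∈ (0,1), g'(p) = −α(1−2p)/√(p(1−p)) and the liability vector S_g(p,·) = (g'(p), 0) + (g(p) − p·g'(p))·𝟙 equals −α(√((1−p)/p), √(p/(1−p))), so in particular its coordinates q = S_g(p,·) satisfy q₁·q₂ = α²; and (ii) conversely, if q ∈ ℝ² satisfies q₁ < 0, q₂ < 0, and q₁·q₂ = α², then p := q₂/(q₁+q₂) lies in (0,1) and q = S_g(p,·). -/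
/-!
With `r = √(p(1-p))` one has `g(p) = -2αr`, `g'(p) = -α(1-2p)/r`, `√((1-p)/p) = r/p` and
`√(p/(1-p)) = r/(1-p)`, so (i) reduces to rational identities modulo `r² = p(1-p)`.
For (ii), `q₁q₂ = α²` gives `q₁/q₂ = (q₁/α)²`, hence `√(q₁/q₂) = -q₁/α`; and
`p = q₂/(q₁+q₂)` is chosen so that `(1-p)/p = q₁/q₂`.
-/

open Real Set

noncomputable def liability (g : ℝ → ℝ) (p : ℝ) : Fin 2 → ℝ :=
  ![deriv g p, 0] + (g p - p * deriv g p) • (fun _ => 1 : Fin 2 → ℝ)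

theorem liability_eq (g : ℝ → ℝ) (p : ℝ) :
    liability g p = ![g p + (1 - p) * deriv g p, g p - p * deriv g p] := by
  ext i
  fin_cases i
  · simp only [liability, Fin.zero_eta, Pi.add_apply, Pi.smul_apply, Matrix.cons_val_zero,
      smul_eq_mul, mul_one]
    ring
  · simp [liability]

theorem hasDerivAt_sqrt_mul_one_sub {p : ℝ} (hp : p ∈ Ioo (0 : ℝ) 1) :
    HasDerivAt (fun x => √(x * (1 - x))) ((1 - 2 * p) / (2 * √(p * (1 - p)))) p := by
  have hpoly : HasDerivAt (fun x : ℝ => x * (1 - x)) (1 - 2 * p) p :=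
    ((hasDerivAt_id p).mul ((hasDerivAt_id p).const_sub 1)).congr_deriv (by simp; ring)
  exact hpoly.sqrt (mul_pos hp.1 (sub_pos.2 hp.2)).ne'

theorem deriv_neg_two_mul_sqrt_mul_one_sub (α : ℝ) {p : ℝ} (hp : p ∈ Ioo (0 : ℝ) 1) :
    deriv (fun x => -2 * α * √(x * (1 - x))) p = -α * (1 - 2 * p) / √(p * (1 - p)) := by
  have hr : √(p * (1 - p)) ≠ 0 := (sqrt_pos.2 (mul_pos hp.1 (sub_pos.2 hp.2))).ne'
  rw [((hasDerivAt_sqrt_mul_one_sub hp).const_mul (-2 * α)).deriv]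
  field_simp

theorem sqrt_div_eq_sqrt_mul_div {a b : ℝ} (ha : 0 ≤ a) (hb : 0 < b) :
    √(a / b) = √(b * a) / b := by
  rw [eq_div_iff hb.ne']
  calc √(a / b) * b = √(a / b) * √(b ^ 2) := by rw [sqrt_sq hb.le]
    _ = √(b * a) := by rw [← sqrt_mul (div_nonneg ha hb.le)]; congr 1; field_simp

theorem liability_neg_two_mul_sqrt_mul_one_sub (α : ℝ) {p : ℝ} (hp : p ∈ Ioo (0 : ℝ) 1) :
    liability (fun x => -2 * α * √(x * (1 - x))) p
      = ![-α * √((1 - p) / p), -α * √(p / (1 - p))] := by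
  have hp0 : p ≠ 0 := hp.1.ne'
  have hp1 : 0 < 1 - p := sub_pos.2 hp.2
  have hp1' : 1 - p ≠ 0 := hp1.ne'
  set r := √(p * (1 - p)) with hr
  have hr0 : r ≠ 0 := (sqrt_pos.2 (mul_pos hp.1 hp1)).ne'
  have hr2 : r ^ 2 = p * (1 - p) := sq_sqrt (mul_pos hp.1 hp1).le
  rw [liability_eq, deriv_neg_two_mul_sqrt_mul_one_sub α hp, sqrt_div_eq_sqrt_mul_div hp1.le hp.1,
    sqrt_div_eq_sqrt_mul_div hp.1.le hp1, mul_comm (1 - p) p, ← hr]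
  congr 2
  · field_simp
    linear_combination (α - 2 * α * p) * hr2
  · field_simp
    linear_combination (2 * α * p - α) * hr2

theorem neg_mul_sqrt_div_mul_neg_mul_sqrt_div (α : ℝ) {p : ℝ} (hp : p ∈ Ioo (0 : ℝ) 1) :
    -α * √((1 - p) / p) * (-α * √(p / (1 - p))) = α ^ 2 := by
  have hp0 : p ≠ 0 := hp.1.ne'
  have hp1 : 0 < 1 - p := sub_pos.2 hp.2
  rw [mul_mul_mul_comm, ← sqrt_mul (div_nonneg hp1.le hp.1.le),
    show (1 - p) / p * (p / (1 - p)) = 1 by field_simp, sqrt_one]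
  ring

theorem div_add_mem_Ioo {a b : ℝ} (ha : a < 0) (hb : b < 0) : b / (a + b) ∈ Ioo (0 : ℝ) 1 :=
  ⟨div_pos_of_neg_of_neg hb (by linarith), (div_lt_one_of_neg (by linarith)).2 (by linarith)⟩

theorem one_sub_div_add {K : Type*} [Field K] {a b : K} (h : a + b ≠ 0) : 1 - b / (a + b) = a / (a + b) := by
  field_simp
  ring

theorem sqrt_div_eq_neg_div {a b α : ℝ} (ha : a < 0) (hα : 0 < α) (hab : a * b = α ^ 2) :
    √(a / b) = -a / α := by
  have hb : b ≠ 0 := by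
    rintro rfl
    exact hα.ne' (pow_eq_zero_iff two_ne_zero |>.1 (by simpa using hab.symm))
  rw [show a / b = (-a / α) ^ 2 by field_simp; linear_combination -a * hab,
    sqrt_sq (div_nonneg (neg_nonneg.2 ha.le) hα.le)]

/-- For `g(p) = −2α√(p(1−p))` with `α > 0`:
(i) on `(0,1)`, `g'(p) = −α(1−2p)/√(p(1−p))`, the liability vector
`S_g(p,·) = (g'(p),0) + (g(p) − p·g'(p))·𝟙` equals
`−α(√((1−p)/p), √(p/(1−p)))`, and its coordinates satisfy `q₁q₂ = α²`;
(ii) conversely, any `q ≺ 0` with `q₁q₂ = α²` equals `S_g(p,·)` for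
`p = q₂/(q₁+q₂) ∈ (0,1)`. -/
theorem statement11 (α : ℝ) (hα : 0 < α) (g : ℝ → ℝ)
    (hg : ∀ p, g p = -2 * α * Real.sqrt (p * (1 - p)))
    (Sg : ℝ → Fin 2 → ℝ)
    (hSg : ∀ p, Sg p = ![deriv g p, 0] + (g p - p * deriv g p) • (fun _ => 1 : Fin 2 → ℝ)) :
    (∀ p ∈ Set.Ioo (0:ℝ) 1,
      deriv g p = -α * (1 - 2*p) / Real.sqrt (p * (1 - p)) ∧
      Sg p = ![-α * Real.sqrt ((1 - p)/p), -α * Real.sqrt (p/(1 - p))] ∧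
      Sg p 0 * Sg p 1 = α ^ 2) ∧
    (∀ q : Fin 2 → ℝ, q 0 < 0 → q 1 < 0 → q 0 * q 1 = α ^ 2 →
      q 1 / (q 0 + q 1) ∈ Set.Ioo (0:ℝ) 1 ∧ q = Sg (q 1 / (q 0 + q 1))) := by
  obtain rfl : g = fun x => -2 * α * √(x * (1 - x)) := funext hg
  obtain rfl : Sg = liability _ := funext hSg
  refine ⟨fun p hp => ⟨deriv_neg_two_mul_sqrt_mul_one_sub α hp, liability_neg_two_mul_sqrt_mul_one_sub α hp, ?_⟩,
    fun q hq0 hq1 hq => ⟨div_add_mem_Ioo hq0 hq1, ?_⟩⟩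
  · simpa only [liability_neg_two_mul_sqrt_mul_one_sub α hp, Matrix.cons_val_zero, Matrix.cons_val_one, Matrix.head_cons]
      using neg_mul_sqrt_div_mul_neg_mul_sqrt_div α hp
  · have hsum : q 0 + q 1 ≠ 0 := by linarith
    rw [liability_neg_two_mul_sqrt_mul_one_sub α (div_add_mem_Ioo hq0 hq1), one_sub_div_add hsum, div_div_div_cancel_right₀ hsum,
      div_div_div_cancel_right₀ hsum, sqrt_div_eq_neg_div hq0 hα hq,
      sqrt_div_eq_neg_div hq1 hα (by rwa [mul_comm])]
    ext i
    fin_cases i <;> simp [field]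
end

section
/- Let 0 < a < b < 1 and α > 0, and define g : [0,1] → ℝ piecewise by g(p) = α·p·(√((1−b)/b) − √((1−a)/a)) for p ≤ a; g(p) = α·(−2√(p(1−p)) + p·√((1−b)/b) + (1−p)·√(a/(1−a))) for a ≤ p ≤ b; and g(p) = α·(1−p)·(√(a/(1−a)) − √(b/(1−b))) for p ≥ b. Then g is convex and continuously differentiable on (0,1), and for every p ∈ (0,1) the liability vector q = S_g(p,·) = (g'(p), 0) + (g(p) − p·g'(p))·𝟙 satisfies (−q₁ + α√((1−b)/b))·(−q₂ + α√(a/(1−a))) = α². -/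
/-!
On `[a, b]` the function `g` is the curve `m p = α (-2 √(p (1 - p)) + p c + (1 - p) d)` with
`c = √((1 - b) / b)`, `d = √(a / (1 - a))`, whose liability vector is
`(α c - α √((1 - p) / p), α d - α √(p / (1 - p)))`; the product of the two shifted coordinates is
therefore `α²`. Outside `[a, b]` the function `g` follows the tangent lines of `m` at `a` and at
`b`, so `g` is `C¹` with derivative `m'` evaluated at the price clamped to `[a, b]`; as `m'` is
increasing, `g` is convex.
Along a tangent line the liability vector does not move, so the invariant at any price is the one
at the clamped price.
-/

open Set

noncomputable section

theorem Real.sqrt_div_eq_div_sqrt_mul {x : ℝ} (hx : 0 ≤ x) (y : ℝ) : √(x / y) = x / √(x * y) := by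
  rcases hx.eq_or_lt with rfl | hx
  · simp
  rw [← mul_div_mul_left x y hx.ne', Real.sqrt_div (mul_self_nonneg x), Real.sqrt_mul_self hx.le]

theorem hasDerivWithinAt_of_eqOn_of_isClosed {f g : ℝ → ℝ} {s : Set ℝ} {f' x : ℝ}
    (hs : IsClosed s) (h : EqOn f g s) (hg : x ∈ s → HasDerivAt g f' x) :
    HasDerivWithinAt f f' s x := by
  by_cases hx : x ∈ s
  · exact (hg hx).hasDerivWithinAt.congr h (h hx)
  · exact HasFDerivWithinAt.of_notMem_closure (by rwa [hs.closure_eq])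

/-- `f` on `[a, b]`, continued by its tangent lines (of slope `f'`) at `a` and at `b`. -/
def tangentExtension (f f' : ℝ → ℝ) {a b : ℝ} (hab : a ≤ b) (x : ℝ) : ℝ :=
  f (projIcc a b hab x) + f' (projIcc a b hab x) * (x - projIcc a b hab x)

section TangentExtension

variable {f f' : ℝ → ℝ} {a b : ℝ} (hab : a ≤ b)

theorem tangentExtension_sub_mul (x : ℝ) :
    tangentExtension f f' hab x - x * f' (projIcc a b hab x) =
      f (projIcc a b hab x) - projIcc a b hab x * f' (projIcc a b hab x) := by
  unfold tangentExtension; ring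

theorem tangentExtension_eqOn_Icc : EqOn (tangentExtension f f' hab) f (Icc a b) := by
  intro x hx
  simp [tangentExtension, projIcc_of_mem hab hx]

theorem tangentExtension_eqOn_Iic :
    EqOn (tangentExtension f f' hab) (fun x ↦ f a + f' a * (x - a)) (Iic a) := by
  intro x hx
  simp [tangentExtension, projIcc_of_le_left hab hx]

theorem tangentExtension_eqOn_Ici :
    EqOn (tangentExtension f f' hab) (fun x ↦ f b + f' b * (x - b)) (Ici b) := by
  intro x hx
  simp [tangentExtension, projIcc_of_right_le hab hx]

theorem hasDerivAt_tangentExtension (hf : ∀ x ∈ Icc a b, HasDerivAt f (f' x) x) (x : ℝ) :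
    HasDerivAt (tangentExtension f f' hab) (f' (projIcc a b hab x)) x := by
  have hline (c : ℝ) : HasDerivAt (fun y ↦ f c + f' c * (y - c)) (f' c) x := by
    simpa using ((hasDerivAt_id x).sub_const c).const_mul (f' c) |>.const_add (f c)
  set F := tangentExtension f f' hab
  set k := f' (projIcc a b hab x)
  have hleft : HasDerivWithinAt F k (Iic a) x :=
    hasDerivWithinAt_of_eqOn_of_isClosed isClosed_Iic (tangentExtension_eqOn_Iic hab) fun hx ↦ by
      rw [show k = f' a by simp [k, projIcc_of_le_left hab hx]]; exact hline a
  have hmid : HasDerivWithinAt F k (Icc a b) x :=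
    hasDerivWithinAt_of_eqOn_of_isClosed isClosed_Icc (tangentExtension_eqOn_Icc hab) fun hx ↦ by
      rw [show k = f' x by simp [k, projIcc_of_mem hab hx]]; exact hf x hx
  have hright : HasDerivWithinAt F k (Ici b) x :=
    hasDerivWithinAt_of_eqOn_of_isClosed isClosed_Ici (tangentExtension_eqOn_Ici hab) fun hx ↦ by
      rw [show k = f' b by simp [k, projIcc_of_right_le hab hx]]; exact hline b
  have := (hleft.union hmid).union hright
  rwa [Iic_union_Icc_eq_Iic hab, Iic_union_Ici, hasDerivWithinAt_univ] at this

variable {hab}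

theorem deriv_tangentExtension (hf : ∀ x ∈ Icc a b, HasDerivAt f (f' x) x) :
    deriv (tangentExtension f f' hab) = fun x ↦ f' (projIcc a b hab x) :=
  funext fun x ↦ (hasDerivAt_tangentExtension hab hf x).deriv

theorem differentiable_tangentExtension (hf : ∀ x ∈ Icc a b, HasDerivAt f (f' x) x) :
    Differentiable ℝ (tangentExtension f f' hab) :=
  fun x ↦ (hasDerivAt_tangentExtension hab hf x).differentiableAt

theorem convexOn_tangentExtension (hf : ∀ x ∈ Icc a b, HasDerivAt f (f' x) x)
    (hf' : MonotoneOn f' (Icc a b)) : ConvexOn ℝ univ (tangentExtension f f' hab) := by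
  refine Monotone.convexOn_univ_of_deriv (differentiable_tangentExtension hf) ?_
  rw [deriv_tangentExtension hf]
  exact fun x y hxy ↦ hf' (projIcc a b hab x).2 (projIcc a b hab y).2 (monotone_projIcc hab hxy)

theorem contDiff_one_tangentExtension (hf : ∀ x ∈ Icc a b, HasDerivAt f (f' x) x)
    (hf' : ContinuousOn f' (Icc a b)) : ContDiff ℝ 1 (tangentExtension f f' hab) := by
  refine contDiff_one_iff_deriv.2 ⟨differentiable_tangentExtension hf, ?_⟩
  rw [deriv_tangentExtension hf]
  exact hf'.comp_continuous (continuous_subtype_val.comp continuous_projIcc)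
    fun x ↦ (projIcc a b hab x).2

end TangentExtension

def bucketCurve (α c d p : ℝ) : ℝ := α * (-2 * √(p * (1 - p)) + p * c + (1 - p) * d)

def bucketCurveDeriv (α c d p : ℝ) : ℝ := α * (√(p / (1 - p)) - √((1 - p) / p) + c - d)

section BucketCurve

variable (α c d : ℝ) {p : ℝ}

theorem bucketCurveDeriv_eq (hp : p ∈ Ioo 0 1) :
    bucketCurveDeriv α c d p = α * ((2 * p - 1) / √(p * (1 - p)) + c - d) := by
  rw [bucketCurveDeriv, Real.sqrt_div_eq_div_sqrt_mul hp.1.le,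
    Real.sqrt_div_eq_div_sqrt_mul (sub_pos.2 hp.2).le, mul_comm (1 - p)]
  ring

theorem hasDerivAt_bucketCurve (hp : p ∈ Ioo 0 1) :
    HasDerivAt (bucketCurve α c d) (bucketCurveDeriv α c d p) p := by
  have hq : 0 < p * (1 - p) := mul_pos hp.1 (sub_pos.2 hp.2)
  have hsqrt : HasDerivAt (fun x ↦ √(x * (1 - x))) ((1 - 2 * p) / (2 * √(p * (1 - p)))) p :=
    (((hasDerivAt_id' p).mul ((hasDerivAt_id' p).const_sub 1)).congr_deriv (by ring)).sqrt hq.ne'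
  refine (((hsqrt.const_mul (-2)).add ((hasDerivAt_id' p).mul_const c)).add
    (((hasDerivAt_id' p).const_sub 1).mul_const d) |>.const_mul α).congr_deriv ?_
  rw [bucketCurveDeriv_eq α c d hp]
  field_simp
  ring

theorem bucketCurve_sub_mul_deriv (hp : p ∈ Ioo 0 1) :
    bucketCurve α c d p - p * bucketCurveDeriv α c d p = α * (d - √(p / (1 - p))) := by
  have hq : 0 < p * (1 - p) := mul_pos hp.1 (sub_pos.2 hp.2)
  rw [bucketCurve, bucketCurveDeriv_eq α c d hp, Real.sqrt_div_eq_div_sqrt_mul hp.1.le]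
  field_simp
  linear_combination (-2 * α) * Real.sq_sqrt hq.le

theorem bucketCurve_add_one_sub_mul_deriv (hp : p ∈ Ioo 0 1) :
    bucketCurve α c d p + (1 - p) * bucketCurveDeriv α c d p = α * (c - √((1 - p) / p)) := by
  have hq : 0 < p * (1 - p) := mul_pos hp.1 (sub_pos.2 hp.2)
  rw [bucketCurve, bucketCurveDeriv_eq α c d hp,
    Real.sqrt_div_eq_div_sqrt_mul (sub_pos.2 hp.2).le, mul_comm (1 - p) p]
  field_simp
  linear_combination (-2 * α) * Real.sq_sqrt hq.le

theorem bucketCurve_liability_invariant (hp : p ∈ Ioo 0 1) :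
    (-(bucketCurveDeriv α c d p + (bucketCurve α c d p - p * bucketCurveDeriv α c d p)) + α * c) *
      (-(bucketCurve α c d p - p * bucketCurveDeriv α c d p) + α * d) = α ^ 2 := by
  have hprod : √((1 - p) / p) * √(p / (1 - p)) = 1 := by
    rw [← Real.sqrt_mul (div_nonneg (sub_pos.2 hp.2).le hp.1.le),
      show (1 - p) / p * (p / (1 - p)) = 1 by field_simp [hp.1.ne', (sub_pos.2 hp.2).ne'],
      Real.sqrt_one]
  rw [show bucketCurveDeriv α c d p + (bucketCurve α c d p - p * bucketCurveDeriv α c d p) =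
      bucketCurve α c d p + (1 - p) * bucketCurveDeriv α c d p by ring,
    bucketCurve_add_one_sub_mul_deriv α c d hp, bucketCurve_sub_mul_deriv α c d hp]
  linear_combination α ^ 2 * hprod

theorem monotoneOn_bucketCurveDeriv (hα : 0 ≤ α) :
    MonotoneOn (bucketCurveDeriv α c d) (Ioo 0 1) := by
  rintro x ⟨hx0, hx1⟩ y ⟨hy0, hy1⟩ hxy
  unfold bucketCurveDeriv
  gcongr

theorem continuousOn_bucketCurveDeriv : ContinuousOn (bucketCurveDeriv α c d) (Ioo 0 1) := by
  unfold bucketCurveDeriv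
  fun_prop (disch := grind)

end BucketCurve

/-- The tangent to the bucket curve at `a` passes through the origin, the one at `b` through
`(1, 0)`. -/
theorem ite_eq_tangentExtension_bucketCurve {a b α : ℝ} (ha : 0 < a) (hab : a < b) (hb : b < 1)
    (p : ℝ) :
    (if p ≤ a then α * p * (√((1 - b) / b) - √((1 - a) / a))
      else if p ≤ b then
        α * (-2 * √(p * (1 - p)) + p * √((1 - b) / b) + (1 - p) * √(a / (1 - a)))
      else α * (1 - p) * (√(a / (1 - a)) - √(b / (1 - b)))) =
      tangentExtension (bucketCurve α √((1 - b) / b) √(a / (1 - a)))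
        (bucketCurveDeriv α √((1 - b) / b) √(a / (1 - a))) hab.le p := by
  split_ifs with hpa hpb
  · have hA := bucketCurve_sub_mul_deriv α √((1 - b) / b) √(a / (1 - a)) ⟨ha, hab.trans hb⟩
    rw [tangentExtension_eqOn_Iic hab.le hpa]
    unfold bucketCurveDeriv at hA ⊢
    linear_combination -hA
  · rw [tangentExtension_eqOn_Icc hab.le ⟨(not_le.1 hpa).le, hpb⟩, bucketCurve]
  · have hB := bucketCurve_add_one_sub_mul_deriv α √((1 - b) / b) √(a / (1 - a)) ⟨ha.trans hab, hb⟩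
    rw [tangentExtension_eqOn_Ici hab.le (not_le.1 hpb).le]
    unfold bucketCurveDeriv at hB ⊢
    linear_combination -hB

/-- The Uniswap-V3 single-bucket generating function `g` (with
bucket `[a,b] ⊆ (0,1)` and liquidity `α > 0`) is convex and continuously
differentiable on `(0,1)`, and its liability vector
`q = S_g(p,·) = (g'(p),0) + (g(p) − p·g'(p))·𝟙` satisfies the shifted constant
product invariant `(−q₁ + α√((1−b)/b))·(−q₂ + α√(a/(1−a))) = α²` for all
`p ∈ (0,1)`. -/
theorem statement12 (a b α : ℝ) (ha : 0 < a) (hab : a < b) (hb : b < 1) (hα : 0 < α)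
    (g : ℝ → ℝ)
    (hg : ∀ p, g p =
      if p ≤ a then α * p * (Real.sqrt ((1 - b)/b) - Real.sqrt ((1 - a)/a))
      else if p ≤ b then
        α * (-2 * Real.sqrt (p * (1 - p)) + p * Real.sqrt ((1 - b)/b)
          + (1 - p) * Real.sqrt (a/(1 - a)))
      else α * (1 - p) * (Real.sqrt (a/(1 - a)) - Real.sqrt (b/(1 - b)))) :
    ConvexOn ℝ (Set.Icc (0:ℝ) 1) g ∧
    ContDiffOn ℝ 1 g (Set.Ioo (0:ℝ) 1) ∧
    ∀ p ∈ Set.Ioo (0:ℝ) 1,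
      (-(deriv g p + (g p - p * deriv g p)) + α * Real.sqrt ((1 - b)/b)) *
        (-(g p - p * deriv g p) + α * Real.sqrt (a/(1 - a))) = α ^ 2 := by
  set m := bucketCurve α √((1 - b) / b) √(a / (1 - a))
  set m' := bucketCurveDeriv α √((1 - b) / b) √(a / (1 - a))
  have hIcc : Icc a b ⊆ Ioo 0 1 := Icc_subset_Ioo ha hb
  have hm (x : ℝ) (hx : x ∈ Icc a b) : HasDerivAt m (m' x) x :=
    hasDerivAt_bucketCurve _ _ _ (hIcc hx)
  obtain rfl : g = tangentExtension m m' hab.le :=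
    funext fun p ↦ (hg p).trans (ite_eq_tangentExtension_bucketCurve ha hab hb p)
  refine ⟨?_, ?_, fun p _ ↦ ?_⟩
  · exact (convexOn_tangentExtension hm
      ((monotoneOn_bucketCurveDeriv _ _ _ hα.le).mono hIcc)).subset (subset_univ _) (convex_Icc 0 1)
  · exact (contDiff_one_tangentExtension hm
      ((continuousOn_bucketCurveDeriv _ _ _).mono hIcc)).contDiffOn
  · simp only [deriv_tangentExtension hm, tangentExtension_sub_mul]
    exact bucketCurve_liability_invariant _ _ _ (hIcc (projIcc a b hab.le p).2)
end
end

section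
/- Let g : [0,1] → ℝ be twice continuously differentiable and convex, let 0 ≤ a < b ≤ 1, and define ℓ(p) = g''(p)·1_{[a,b]}(p), ĝ(p) = ∫₀ᵖ ∫₀ᵗ ℓ(s) ds dt, and g⁽ʲ⁾(p) = ĝ(p) − p·ĝ(1). Then for every p ∈ [0,1] at which g⁽ʲ⁾ is differentiable, the liability vector (g⁽ʲ⁾'(p), 0) + (g⁽ʲ⁾(p) − p·g⁽ʲ⁾'(p))·𝟙 equals (S_g(max{a,p},1) − S_g(max{b,p},1), S_g(min{b,p},0) − S_g(min{a,p},0)), where S_g(p,y) = g(p) + g'(p)(y − p). -/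
open Set intervalIntegral MeasureTheory

private lemma auxH (g g' : ℝ → ℝ) (a b : ℝ) (ha : 0 ≤ a) (hab : a < b) (hb : b ≤ 1)
    (hg' : ∀ p ∈ Set.Icc (0:ℝ) 1, HasDerivWithinAt g (g' p) (Set.Icc (0:ℝ) 1) p) (t : ℝ) :
    HasDerivAt (fun u => g (max a (min u b)) + g' (max a (min u b)) * (u - max a (min u b)))
      (g' (max a (min t b))) t := by
  have hsub : Set.Icc a b ⊆ Set.Icc (0:ℝ) 1 := Set.Icc_subset_Icc ha hb
  have claff : ∀ c x : ℝ, HasDerivAt (fun u => g c + g' c * (u - c)) (g' c) x := by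
    intro c x
    have := (((hasDerivAt_id x).sub_const c).const_mul (g' c)).const_add (g c)
    simpa using this
  have cllow : ∀ u : ℝ, u ≤ a → max a (min u b) = a := by
    intro u hu
    rw [min_eq_left (hu.trans hab.le), max_eq_left hu]
  have clmid : ∀ u : ℝ, a ≤ u → u ≤ b → max a (min u b) = u := by
    intro u h1 h2
    rw [min_eq_left h2, max_eq_right h1]
  have clhigh : ∀ u : ℝ, b ≤ u → max a (min u b) = b := by
    intro u hu
    rw [min_eq_right hu, max_eq_right hab.le]
  have eqmid : Set.EqOn (fun u => g (max a (min u b)) + g' (max a (min u b)) * (u - max a (min u b)))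
      g (Set.Icc a b) := by
    intro u hu
    simp only [clmid u hu.1 hu.2]
    ring
  have hmemab : ∀ u ∈ Set.Icc a b, HasDerivWithinAt g (g' u) (Set.Icc a b) u :=
    fun u hu => (hg' u (hsub hu)).mono hsub
  rcases lt_trichotomy t a with h | h | h
  · rw [cllow t h.le]
    refine (claff a t).congr_of_eventuallyEq ?_
    filter_upwards [Iio_mem_nhds h] with u hu
    rw [cllow u (le_of_lt hu)]
  · rw [h, clmid a le_rfl hab.le]
    have h1 : HasDerivWithinAt (fun u => g (max a (min u b)) + g' (max a (min u b)) * (u - max a (min u b)))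
        (g' a) (Set.Iic a) a := by
      refine ((claff a a).hasDerivWithinAt).congr ?_ ?_
      · intro u hu; rw [cllow u hu]
      · rw [cllow a le_rfl]
    have h2 : HasDerivWithinAt (fun u => g (max a (min u b)) + g' (max a (min u b)) * (u - max a (min u b)))
        (g' a) (Set.Icc a b) a :=
      (hmemab a (Set.left_mem_Icc.2 hab.le)).congr eqmid (eqmid (Set.left_mem_Icc.2 hab.le))
    have h3 := h1.union h2
    rw [Set.Iic_union_Icc_eq_Iic hab.le] at h3
    exact h3.hasDerivAt (Iic_mem_nhds hab)
  · rcases lt_trichotomy t b with h2 | h2 | h2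
    · rw [clmid t h.le h2.le]
      exact ((hmemab t ⟨h.le, h2.le⟩).congr eqmid (eqmid ⟨h.le, h2.le⟩)).hasDerivAt
        (Icc_mem_nhds h h2)
    · rw [h2, clmid b hab.le le_rfl]
      have h1 : HasDerivWithinAt (fun u => g (max a (min u b)) + g' (max a (min u b)) * (u - max a (min u b)))
          (g' b) (Set.Icc a b) b :=
        (hmemab b (Set.right_mem_Icc.2 hab.le)).congr eqmid (eqmid (Set.right_mem_Icc.2 hab.le))
      have h3 : HasDerivWithinAt (fun u => g (max a (min u b)) + g' (max a (min u b)) * (u - max a (min u b)))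
          (g' b) (Set.Ici b) b := by
        refine ((claff b b).hasDerivWithinAt).congr ?_ ?_
        · intro u hu; rw [clhigh u hu]
        · rw [clhigh b le_rfl]
      have h4 := h1.union h3
      rw [Set.Icc_union_Ici_eq_Ici hab.le] at h4
      exact h4.hasDerivAt (Ici_mem_nhds hab)
    · rw [clhigh t h2.le]
      refine (claff b t).congr_of_eventuallyEq ?_
      filter_upwards [Ioi_mem_nhds h2] with u hu
      rw [clhigh u (le_of_lt hu)]
private lemma auxInner (g' g'' : ℝ → ℝ) (a b : ℝ) (ha : 0 ≤ a) (hab : a < b) (hb : b ≤ 1)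
    (hg'' : ∀ p ∈ Set.Icc (0:ℝ) 1, HasDerivWithinAt g' (g'' p) (Set.Icc (0:ℝ) 1) p)
    (hcont : ContinuousOn g'' (Set.Icc (0:ℝ) 1)) (t : ℝ) :
    (∫ s in (0:ℝ)..t, Set.indicator (Set.Icc a b) g'' s) = g' (max a (min t b)) - g' a := by
  have hsub : Set.Icc a b ⊆ Set.Icc (0:ℝ) 1 := Set.Icc_subset_Icc ha hb
  have hint : Integrable (Set.indicator (Set.Icc a b) g'') := by
    rw [integrable_indicator_iff measurableSet_Icc]
    exact (hcont.mono hsub).integrableOn_Icc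
  have hii : ∀ c d : ℝ, IntervalIntegrable (Set.indicator (Set.Icc a b) g'') volume c d :=
    fun c d => hint.intervalIntegrable
  -- low piece
  have Zlow : ∀ t : ℝ, t ≤ a → (∫ s in (0:ℝ)..t, Set.indicator (Set.Icc a b) g'' s) = 0 := by
    intro t ht
    have hane : ∀ᵐ s : ℝ, s ≠ a := by
      have : (volume : Measure ℝ) {a} = 0 := measure_singleton a
      simpa [ae_iff] using this
    rw [intervalIntegral.integral_congr_ae (g := fun _ => (0:ℝ)) ?_, intervalIntegral.integral_zero]
    filter_upwards [hane] with s hs hmem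
    rcases Set.mem_uIoc.1 hmem with h | h
    · exact Set.indicator_of_notMem (fun hm => hs (le_antisymm (h.2.trans ht) hm.1)) _
    · exact Set.indicator_of_notMem (fun hm => hs (le_antisymm (h.2.trans ha) hm.1)) _
  -- high piece
  have Zhigh : ∀ t : ℝ, b ≤ t → (∫ s in b..t, Set.indicator (Set.Icc a b) g'' s) = 0 := by
    intro t ht
    have hbne : ∀ᵐ s : ℝ, s ≠ b := by
      have : (volume : Measure ℝ) {b} = 0 := measure_singleton b
      simpa [ae_iff] using this
    rw [intervalIntegral.integral_congr_ae (g := fun _ => (0:ℝ)) ?_, intervalIntegral.integral_zero]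
    filter_upwards [hbne] with s hs hmem
    rcases Set.mem_uIoc.1 hmem with h | h
    · exact Set.indicator_of_notMem (fun hm => hs (le_antisymm hm.2 h.1.le)) _
    · exact Set.indicator_of_notMem (fun hm => hs (le_antisymm hm.2 ((ht.trans h.1.le)))) _
  -- middle piece
  have Mid : ∀ t : ℝ, a ≤ t → t ≤ b → (∫ s in a..t, Set.indicator (Set.Icc a b) g'' s)
      = g' t - g' a := by
    intro t h1 h2
    have heq : Set.EqOn (Set.indicator (Set.Icc a b) g'') g'' (Set.uIcc a t) := by
      intro s hsm
      rw [Set.uIcc_of_le h1] at hsm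
      exact Set.indicator_of_mem (Set.mem_Icc.2 ⟨hsm.1, hsm.2.trans h2⟩) _
    rw [intervalIntegral.integral_congr heq]
    refine intervalIntegral.integral_eq_sub_of_hasDeriv_right_of_le h1 ?_ ?_ ?_
    · have hc : ContinuousOn g' (Set.Icc (0:ℝ) 1) :=
        fun x hx => (hg'' x hx).continuousWithinAt
      exact hc.mono (Set.Icc_subset_Icc ha (h2.trans hb))
    · intro x hx
      have hx01 : x ∈ Set.Ioo (0:ℝ) 1 := ⟨ha.trans_lt hx.1, hx.2.trans_le (h2.trans hb)⟩
      exact ((hg'' x (Set.Ioo_subset_Icc_self hx01)).hasDerivAt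
        (Icc_mem_nhds hx01.1 hx01.2)).hasDerivWithinAt
    · exact (hcont.mono (Set.Icc_subset_Icc ha (h2.trans hb))).intervalIntegrable_of_Icc h1
  -- combine
  rcases le_total t a with h | h
  · rw [min_eq_left (h.trans hab.le), max_eq_left h]
    rw [sub_self]
    exact Zlow t h
  rcases le_total t b with h2 | h2
  · rw [min_eq_left h2, max_eq_right h]
    rw [← intervalIntegral.integral_add_adjacent_intervals (hii 0 a) (hii a t),
      Zlow a le_rfl, Mid t h h2, zero_add]
  · rw [min_eq_right h2, max_eq_right hab.le]
    rw [← intervalIntegral.integral_add_adjacent_intervals (hii 0 b) (hii b t), Zhigh t h2,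
      ← intervalIntegral.integral_add_adjacent_intervals (hii 0 a) (hii a b),
      Zlow a le_rfl, Mid b hab.le le_rfl, zero_add, add_zero]



noncomputable section

/-- For `g : [0,1] → ℝ` twice continuously differentiable and
convex, `0 ≤ a < b ≤ 1`, `ℓ = g''·1_{[a,b]}`, `ĝ(p) = ∫₀ᵖ∫₀ᵗ ℓ(s) ds dt`, and
`g⁽ʲ⁾(p) = ĝ(p) − p·ĝ(1)`: at every `p ∈ [0,1]` where `g⁽ʲ⁾` is differentiable,
the liability vector `(g⁽ʲ⁾'(p),0) + (g⁽ʲ⁾(p) − p·g⁽ʲ⁾'(p))·𝟙` equals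
`(S_g(max{a,p},1) − S_g(max{b,p},1), S_g(min{b,p},0) − S_g(min{a,p},0))`,
where `S_g(p,y) = g(p) + g'(p)(y−p)`. -/
theorem statement13 (g g' g'' : ℝ → ℝ)
    (hg' : ∀ p ∈ Set.Icc (0:ℝ) 1, HasDerivWithinAt g (g' p) (Set.Icc (0:ℝ) 1) p)
    (hg'' : ∀ p ∈ Set.Icc (0:ℝ) 1, HasDerivWithinAt g' (g'' p) (Set.Icc (0:ℝ) 1) p)
    (hcont : ContinuousOn g'' (Set.Icc (0:ℝ) 1))
    (hconv : ConvexOn ℝ (Set.Icc (0:ℝ) 1) g)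
    (a b : ℝ) (ha : 0 ≤ a) (hab : a < b) (hb : b ≤ 1)
    (ell ghat gj : ℝ → ℝ)
    (hell : ∀ p, ell p = Set.indicator (Set.Icc a b) g'' p)
    (hghat : ∀ p, ghat p = ∫ t in (0:ℝ)..p, ∫ s in (0:ℝ)..t, ell s)
    (hgj : ∀ p, gj p = ghat p - p * ghat 1)
    (Sg : ℝ → ℝ → ℝ) (hSg : ∀ p y, Sg p y = g p + g' p * (y - p)) :
    ∀ p ∈ Set.Icc (0:ℝ) 1, DifferentiableAt ℝ gj p →
      (![deriv gj p, 0] + (gj p - p * deriv gj p) • (fun _ => 1 : Fin 2 → ℝ)) =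
        ![Sg (max a p) 1 - Sg (max b p) 1, Sg (min b p) 0 - Sg (min a p) 0] := by
  intro p hp _
  have hb0 : (0:ℝ) ≤ b := ha.trans hab.le
  have hsub : Set.Icc a b ⊆ Set.Icc (0:ℝ) 1 := Set.Icc_subset_Icc ha hb
  have hg'c : ContinuousOn g' (Set.Icc (0:ℝ) 1) := fun x hx => (hg'' x hx).continuousWithinAt
  have hGcont : Continuous (fun u : ℝ => g' (max a (min u b))) := by
    refine hg'c.comp_continuous (continuous_const.max (continuous_id.min continuous_const)) (fun u => ?_)
    exact hsub ⟨le_max_left _ _, max_le hab.le (min_le_right _ _)⟩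
  have hH := auxH g g' a b ha hab hb hg'
  have key : ∀ q : ℝ, ghat q =
      (g (max a (min q b)) + g' (max a (min q b)) * (q - max a (min q b)))
        - (g a + g' a * ((0:ℝ) - a)) - q * g' a := by
    intro q
    rw [hghat]
    have e1 : ∀ t : ℝ, (∫ s in (0:ℝ)..t, ell s) = g' (max a (min t b)) - g' a := by
      intro t
      simp only [hell]
      exact auxInner g' g'' a b ha hab hb hg'' hcont t
    rw [intervalIntegral.integral_congr (g := fun t => g' (max a (min t b)) - g' a)
      (fun t _ => e1 t)]
    rw [intervalIntegral.integral_sub (hGcont.intervalIntegrable 0 q) intervalIntegrable_const]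
    rw [intervalIntegral.integral_eq_sub_of_hasDerivAt (fun t _ => hH t)
      (hGcont.intervalIntegrable 0 q)]
    rw [intervalIntegral.integral_const]
    have h0 : max a (min (0:ℝ) b) = a := by rw [min_eq_left hb0, max_eq_left ha]
    simp only [h0, smul_eq_mul, sub_zero]
    try ring
  have hghatD : ∀ q : ℝ, HasDerivAt ghat (g' (max a (min q b)) - g' a) q := by
    intro q
    have hghate : ghat = fun q => (g (max a (min q b)) + g' (max a (min q b)) * (q - max a (min q b)))
        - (g a + g' a * ((0:ℝ) - a)) - q * g' a := funext key
    rw [hghate]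
    exact ((hH q).sub_const _).sub (hasDerivAt_mul_const (g' a))
  have hgjD : HasDerivAt gj (g' (max a (min p b)) - g' a - ghat 1) p := by
    have hgje : gj = fun q => ghat q - q * ghat 1 := funext hgj
    rw [hgje]
    exact (hghatD p).sub (hasDerivAt_mul_const (ghat 1))
  have hder : deriv gj p = g' (max a (min p b)) - g' a - ghat 1 := hgjD.deriv
  funext i
  fin_cases i <;>
    simp only [Matrix.cons_val_zero, Matrix.cons_val_one, Matrix.head_cons, Pi.add_apply,
      Pi.smul_apply, smul_eq_mul, Matrix.cons_val', Matrix.empty_val',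
      Matrix.cons_val_fin_one, Fin.mk_zero, Fin.mk_one, Fin.isValue] <;>
  · rw [hder, hgj p, key p, key 1, min_eq_right hb, max_eq_right hab.le]
    simp only [hSg]
    rcases le_total p a with hpa | hpa
    · simp only [min_eq_left (hpa.trans hab.le), max_eq_left hpa,
        max_eq_left (hpa.trans hab.le), min_eq_right (hpa.trans hab.le), min_eq_right hpa]
      ring
    rcases le_total p b with hpb | hpb
    · simp only [min_eq_left hpb, max_eq_right hpa, max_eq_left hpb, min_eq_right hpb,
        min_eq_left hpa]
      ring
    · simp only [min_eq_right hpb, max_eq_right hab.le, max_eq_right (hab.le.trans hpb),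
        max_eq_right hpb, min_eq_left hpb, min_eq_left (hab.le.trans hpb)]
      ring
end
end

section
/- For b > 0 let C_b : ℝ² → ℝ be the LMSR cost function C_b(q) = b·log(e^{q₁/b} + e^{q₂/b}). Then for all b₁, b₂ > 0 the infimal convolution of C_{b₁} and C_{b₂} is C_{b₁+b₂}: for every q ∈ ℝ², inf{C_{b₁}(q¹) + C_{b₂}(q²) : q¹ + q² = q} = (b₁+b₂)·log(e^{q₁/(b₁+b₂)} + e^{q₂/(b₁+b₂)}). -/
noncomputable section

/-- The LMSR cost function with liquidity parameter `b` on two securities. -/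
def lmsr (b : ℝ) (q : ℝ × ℝ) : ℝ := b * Real.log (Real.exp (q.1 / b) + Real.exp (q.2 / b))

/-!
The map `(b, q) ↦ lmsr b q` is the perspective of the log-sum-exp function, so it is positively
homogeneous and jointly convex, hence subadditive:
`lmsr (b₁ + b₂) (q¹ + q²) ≤ lmsr b₁ q¹ + lmsr b₂ q²`.
In exponential coordinates this subadditivity is the two-term Hölder inequality with exponents
`(b₁ + b₂) / b₁` and `(b₁ + b₂) / b₂`. Equality holds when `q` is split in the ratio `b₁ : b₂`.
-/

open Real

theorem rpow_mul_rpow_add_rpow_mul_rpow_le {θ u v s t : ℝ} (hθ₀ : 0 ≤ θ) (hθ₁ : θ ≤ 1)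
    (hu : 0 < u) (hv : 0 < v) (hs : 0 < s) (ht : 0 < t) :
    u ^ θ * v ^ (1 - θ) + s ^ θ * t ^ (1 - θ) ≤ (u + s) ^ θ * (v + t) ^ (1 - θ) := by
  have hus : 0 < u + s := by positivity
  have hvt : 0 < v + t := by positivity
  have h1θ : 0 ≤ 1 - θ := by linarith
  have h₁ := geom_mean_le_arith_mean2_weighted hθ₀ h1θ (div_pos hu hus).le (div_pos hv hvt).le
    (add_sub_cancel θ 1)
  have h₂ := geom_mean_le_arith_mean2_weighted hθ₀ h1θ (div_pos hs hus).le (div_pos ht hvt).le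
    (add_sub_cancel θ 1)
  have hsum : (u / (u + s)) ^ θ * (v / (v + t)) ^ (1 - θ)
      + (s / (u + s)) ^ θ * (t / (v + t)) ^ (1 - θ) ≤ 1 :=
    calc _ ≤ (θ * (u / (u + s)) + (1 - θ) * (v / (v + t)))
          + (θ * (s / (u + s)) + (1 - θ) * (t / (v + t))) := add_le_add h₁ h₂
      _ = 1 := by field_simp; ring
  rwa [div_rpow hu.le hus.le, div_rpow hv.le hvt.le, div_rpow hs.le hus.le,
    div_rpow ht.le hvt.le, div_mul_div_comm, div_mul_div_comm, ← add_div,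
    div_le_one (by positivity)] at hsum

theorem lmsr_mul_smul (c b : ℝ) (q : ℝ × ℝ) : lmsr (c * b) (c • q) = c * lmsr b q := by
  rcases eq_or_ne c 0 with rfl | hc
  · simp [lmsr]
  · simp only [lmsr, Prod.smul_fst, Prod.smul_snd, smul_eq_mul, mul_div_mul_left _ _ hc]
    ring

theorem lmsr_add_le {b₁ b₂ : ℝ} (hb₁ : 0 < b₁) (hb₂ : 0 < b₂) (p₁ p₂ : ℝ × ℝ) :
    lmsr (b₁ + b₂) (p₁ + p₂) ≤ lmsr b₁ p₁ + lmsr b₂ p₂ := by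
  set b := b₁ + b₂
  have hb : 0 < b := by positivity
  have hexp (x y : ℝ) : exp ((x + y) / b) = exp (x / b₁) ^ (b₁ / b) * exp (y / b₂) ^ (b₂ / b) := by
    rw [← exp_mul, ← exp_mul, ← exp_add]
    congr 1
    field_simp
  have hθ : b₂ / b = 1 - b₁ / b := by field_simp; ring
  have hholder := rpow_mul_rpow_add_rpow_mul_rpow_le (div_pos hb₁ hb).le
    ((div_le_one hb).2 (by linarith)) (exp_pos (p₁.1 / b₁)) (exp_pos (p₂.1 / b₂))
    (exp_pos (p₁.2 / b₁)) (exp_pos (p₂.2 / b₂))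
  rw [← hθ] at hholder
  calc lmsr b (p₁ + p₂)
      = b * log (exp (p₁.1 / b₁) ^ (b₁ / b) * exp (p₂.1 / b₂) ^ (b₂ / b)
          + exp (p₁.2 / b₁) ^ (b₁ / b) * exp (p₂.2 / b₂) ^ (b₂ / b)) := by
        simp only [lmsr, Prod.fst_add, Prod.snd_add, hexp]
    _ ≤ b * log ((exp (p₁.1 / b₁) + exp (p₁.2 / b₁)) ^ (b₁ / b)
          * (exp (p₂.1 / b₂) + exp (p₂.2 / b₂)) ^ (b₂ / b)) := by
        gcongr
    _ = lmsr b₁ p₁ + lmsr b₂ p₂ := by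
        rw [log_mul (by positivity) (by positivity), log_rpow (by positivity),
          log_rpow (by positivity)]
        unfold lmsr
        field_simp

/-- The infimal convolution of the LMSR cost functions with
parameters `b₁, b₂ > 0` is the LMSR cost function with parameter `b₁ + b₂`. -/
theorem statement14 (b₁ b₂ : ℝ) (hb₁ : 0 < b₁) (hb₂ : 0 < b₂) (q : ℝ × ℝ) :
    sInf {s : ℝ | ∃ q₁ q₂ : ℝ × ℝ, q₁ + q₂ = q ∧ s = lmsr b₁ q₁ + lmsr b₂ q₂} =
      (b₁ + b₂) * Real.log (Real.exp (q.1 / (b₁ + b₂)) + Real.exp (q.2 / (b₁ + b₂))) := by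
  change _ = lmsr (b₁ + b₂) q
  have hb : b₁ + b₂ ≠ 0 := by positivity
  have hsplit (b : ℝ) : lmsr b ((b / (b₁ + b₂)) • q) = b / (b₁ + b₂) * lmsr (b₁ + b₂) q := by
    rw [← lmsr_mul_smul, div_mul_cancel₀ _ hb]
  refine IsLeast.csInf_eq ⟨⟨(b₁ / (b₁ + b₂)) • q, (b₂ / (b₁ + b₂)) • q, ?_, ?_⟩, ?_⟩
  · rw [← add_smul, ← add_div, div_self hb, one_smul]
  · rw [hsplit, hsplit, ← add_mul, ← add_div, div_self hb, one_mul]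
  · rintro _ ⟨p₁, p₂, rfl, rfl⟩
    exact lmsr_add_le hb₁ hb₂ p₁ p₂
end
end

section
/- Let Ḡ : ℝ³_{>0} → ℝ be given by Ḡ(x) = −2√(x₁x₂) − 2√(x₂x₃) − 2√(x₁x₃), and let v = (1, 0, −1) ∈ ℝ³. Then for every p ∈ ℝ³_{>0}, vᵀ ∇²Ḡ(p) v = 1/√(p₁p₃) + (√(p₁p₂) + √(p₁p₃))/(2p₁²) + (√(p₁p₃) + √(p₂p₃))/(2p₃²); in particular vᵀ ∇²Ḡ(p) v ≥ 1/√(p₁p₃). -/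
noncomputable section

theorem key (p₁ p₂ p₃ : ℝ) (h₁ : 0 < p₁) (h₂ : 0 < p₂) (h₃ : 0 < p₃) :
    iteratedDeriv 2
        (fun t : ℝ => -2 * Real.sqrt ((p₁ + t) * p₂) - 2 * Real.sqrt (p₂ * (p₃ - t))
          - 2 * Real.sqrt ((p₁ + t) * (p₃ - t))) 0 =
      1 / Real.sqrt (p₁ * p₃) + (Real.sqrt (p₁ * p₂) + Real.sqrt (p₁ * p₃)) / (2 * p₁ ^ 2)
        + (Real.sqrt (p₁ * p₃) + Real.sqrt (p₂ * p₃)) / (2 * p₃ ^ 2) := by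
  set B := Real.sqrt p₂ with hB
  set g : ℝ → ℝ := fun t => -2 * (Real.sqrt (p₁ + t) * B) - 2 * (B * Real.sqrt (p₃ - t))
      - 2 * (Real.sqrt (p₁ + t) * Real.sqrt (p₃ - t)) with hg
  set g₁ : ℝ → ℝ := fun t => (-(B + Real.sqrt (p₃ - t))) / Real.sqrt (p₁ + t)
      + (B + Real.sqrt (p₁ + t)) / Real.sqrt (p₃ - t) with hg₁
  have hmem : Set.Ioo (-p₁) p₃ ∈ nhds (0:ℝ) := Ioo_mem_nhds (by linarith) h₃
  -- F =ᶠ g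
  have hFg : (fun t : ℝ => -2 * Real.sqrt ((p₁ + t) * p₂) - 2 * Real.sqrt (p₂ * (p₃ - t))
          - 2 * Real.sqrt ((p₁ + t) * (p₃ - t))) =ᶠ[nhds 0] g := by
    filter_upwards [hmem] with t ht
    have h1 : (0:ℝ) ≤ p₁ + t := by have := ht.1; linarith
    rw [hg]
    rw [Real.sqrt_mul h1, Real.sqrt_mul h₂.le, Real.sqrt_mul h1]
  -- deriv g = g₁ on Ioo
  have hderivg : ∀ t ∈ Set.Ioo (-p₁) p₃, HasDerivAt g (g₁ t) t := by
    intro t ht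
    have hu : (0:ℝ) < p₁ + t := by have := ht.1; linarith
    have hw : (0:ℝ) < p₃ - t := by have := ht.2; linarith
    have hune : Real.sqrt (p₁ + t) ≠ 0 := ne_of_gt (Real.sqrt_pos.mpr hu)
    have hwne : Real.sqrt (p₃ - t) ≠ 0 := ne_of_gt (Real.sqrt_pos.mpr hw)
    have hU : HasDerivAt (fun s : ℝ => Real.sqrt (p₁ + s)) (1 / (2 * Real.sqrt (p₁ + t))) t :=
      ((hasDerivAt_id t).const_add p₁).sqrt (ne_of_gt hu)
    have hW : HasDerivAt (fun s : ℝ => Real.sqrt (p₃ - s)) ((-1) / (2 * Real.sqrt (p₃ - t))) t :=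
      ((hasDerivAt_id t).const_sub p₃).sqrt (ne_of_gt hw)
    have hG : HasDerivAt g
        (-2 * (1 / (2 * Real.sqrt (p₁ + t)) * B)
          - 2 * (B * ((-1) / (2 * Real.sqrt (p₃ - t))))
          - 2 * (1 / (2 * Real.sqrt (p₁ + t)) * Real.sqrt (p₃ - t)
              + Real.sqrt (p₁ + t) * ((-1) / (2 * Real.sqrt (p₃ - t))))) t := by
      have t1 := (hU.mul_const B).const_mul (-2 : ℝ)
      have t2 := (hW.const_mul B).const_mul (2 : ℝ)
      have t3 := (hU.mul hW).const_mul (2 : ℝ)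
      exact (t1.sub t2).sub t3
    have heq : -2 * (1 / (2 * Real.sqrt (p₁ + t)) * B)
          - 2 * (B * ((-1) / (2 * Real.sqrt (p₃ - t))))
          - 2 * (1 / (2 * Real.sqrt (p₁ + t)) * Real.sqrt (p₃ - t)
              + Real.sqrt (p₁ + t) * ((-1) / (2 * Real.sqrt (p₃ - t)))) = g₁ t := by
      rw [hg₁]
      field_simp
      ring
    exact heq ▸ hG
  have hdg : deriv g =ᶠ[nhds 0] g₁ := by
    filter_upwards [hmem] with t ht
    exact (hderivg t ht).deriv
  -- second derivative of g₁ at 0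
  have hu0 : (0:ℝ) < p₁ + 0 := by linarith
  have hw0 : (0:ℝ) < p₃ - 0 := by linarith
  have hune0 : Real.sqrt (p₁ + 0) ≠ 0 := ne_of_gt (Real.sqrt_pos.mpr hu0)
  have hwne0 : Real.sqrt (p₃ - 0) ≠ 0 := ne_of_gt (Real.sqrt_pos.mpr hw0)
  have hU0 : HasDerivAt (fun s : ℝ => Real.sqrt (p₁ + s)) (1 / (2 * Real.sqrt (p₁ + 0))) 0 :=
    ((hasDerivAt_id (0:ℝ)).const_add p₁).sqrt (ne_of_gt hu0)
  have hW0 : HasDerivAt (fun s : ℝ => Real.sqrt (p₃ - s)) ((-1) / (2 * Real.sqrt (p₃ - 0))) 0 :=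
    ((hasDerivAt_id (0:ℝ)).const_sub p₃).sqrt (ne_of_gt hw0)
  have hT1 : HasDerivAt (fun s : ℝ => (-(B + Real.sqrt (p₃ - s))) / Real.sqrt (p₁ + s))
      (((-((-1) / (2 * Real.sqrt (p₃ - 0)))) * Real.sqrt (p₁ + 0)
        - (-(B + Real.sqrt (p₃ - 0))) * (1 / (2 * Real.sqrt (p₁ + 0)))) / Real.sqrt (p₁ + 0) ^ 2) 0 :=
    ((hW0.const_add B).neg).div hU0 hune0
  have hT2 : HasDerivAt (fun s : ℝ => (B + Real.sqrt (p₁ + s)) / Real.sqrt (p₃ - s))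
      (((1 / (2 * Real.sqrt (p₁ + 0))) * Real.sqrt (p₃ - 0)
        - (B + Real.sqrt (p₁ + 0)) * ((-1) / (2 * Real.sqrt (p₃ - 0)))) / Real.sqrt (p₃ - 0) ^ 2) 0 :=
    (hU0.const_add B).div hW0 hwne0
  have hG1 : HasDerivAt g₁
      ((((-((-1) / (2 * Real.sqrt (p₃ - 0)))) * Real.sqrt (p₁ + 0)
        - (-(B + Real.sqrt (p₃ - 0))) * (1 / (2 * Real.sqrt (p₁ + 0)))) / Real.sqrt (p₁ + 0) ^ 2)
      + (((1 / (2 * Real.sqrt (p₁ + 0))) * Real.sqrt (p₃ - 0)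
        - (B + Real.sqrt (p₁ + 0)) * ((-1) / (2 * Real.sqrt (p₃ - 0)))) / Real.sqrt (p₃ - 0) ^ 2)) 0 :=
    hT1.add hT2
  -- assemble
  have step1 : iteratedDeriv 2
        (fun t : ℝ => -2 * Real.sqrt ((p₁ + t) * p₂) - 2 * Real.sqrt (p₂ * (p₃ - t))
          - 2 * Real.sqrt ((p₁ + t) * (p₃ - t))) 0 = deriv g₁ 0 := by
    rw [iteratedDeriv_succ, iteratedDeriv_one]
    exact ((hFg.deriv).trans hdg).deriv_eq
  rw [step1, hG1.deriv]
  -- final algebra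
  rw [show p₁ + 0 = p₁ by ring, show p₃ - 0 = p₃ by ring]
  rw [Real.sqrt_mul h₁.le p₃, Real.sqrt_mul h₁.le p₂, Real.sqrt_mul h₂.le p₃]
  set A := Real.sqrt p₁ with hA
  set C := Real.sqrt p₃ with hC
  have hA2 : A ^ 2 = p₁ := Real.sq_sqrt h₁.le
  have hC2 : C ^ 2 = p₃ := Real.sq_sqrt h₃.le
  have hAne : A ≠ 0 := ne_of_gt (Real.sqrt_pos.mpr h₁)
  have hCne : C ≠ 0 := ne_of_gt (Real.sqrt_pos.mpr h₃)
  rw [← hA2, ← hC2]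
  field_simp
  ring

/-- For `Ḡ(x) = −2√(x₁x₂) − 2√(x₂x₃) − 2√(x₁x₃)` and trade
direction `v = (1,0,−1)`, the quadratic form `vᵀ∇²Ḡ(p)v` (the second derivative
of `t ↦ Ḡ(p + t·v)` at `t = 0`) equals
`1/√(p₁p₃) + (√(p₁p₂)+√(p₁p₃))/(2p₁²) + (√(p₁p₃)+√(p₂p₃))/(2p₃²)` for every
`p ∈ ℝ³_{>0}`; in particular it is at least `1/√(p₁p₃)`. -/
theorem statement18 (p₁ p₂ p₃ : ℝ) (h₁ : 0 < p₁) (h₂ : 0 < p₂) (h₃ : 0 < p₃) :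
    iteratedDeriv 2
        (fun t : ℝ => -2 * Real.sqrt ((p₁ + t) * p₂) - 2 * Real.sqrt (p₂ * (p₃ - t))
          - 2 * Real.sqrt ((p₁ + t) * (p₃ - t))) 0 =
      1 / Real.sqrt (p₁ * p₃) + (Real.sqrt (p₁ * p₂) + Real.sqrt (p₁ * p₃)) / (2 * p₁ ^ 2)
        + (Real.sqrt (p₁ * p₃) + Real.sqrt (p₂ * p₃)) / (2 * p₃ ^ 2) ∧
    1 / Real.sqrt (p₁ * p₃) ≤
      iteratedDeriv 2
        (fun t : ℝ => -2 * Real.sqrt ((p₁ + t) * p₂) - 2 * Real.sqrt (p₂ * (p₃ - t))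
          - 2 * Real.sqrt ((p₁ + t) * (p₃ - t))) 0 := by
  have h := key p₁ p₂ p₃ h₁ h₂ h₃
  refine ⟨h, ?_⟩
  rw [h]
  have t1 : 0 ≤ (Real.sqrt (p₁ * p₂) + Real.sqrt (p₁ * p₃)) / (2 * p₁ ^ 2) := by positivity
  have t2 : 0 ≤ (Real.sqrt (p₁ * p₃) + Real.sqrt (p₂ * p₃)) / (2 * p₃ ^ 2) := by positivity
  linarith
end
end

section
/- For α > 0 let C : ℝ² → ℝ be the cost function of the constant product market maker, C(q) = ½(q₁ + q₂ + √(4α² + (q₁ − q₂)²)). Then for every q ∈ ℝ², C(q) = 0 if and only if q₁·q₂ = α², q₁ < 0, and q₂ < 0; in particular every point of the zero level set of C satisfies the no-liability condition q ≺ 0. -/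
noncomputable section

/-- For the constant product cost function
`C(q) = ½(q₁ + q₂ + √(4α² + (q₁−q₂)²))` with `α > 0`: `C(q) = 0` iff
`q₁q₂ = α²`, `q₁ < 0`, and `q₂ < 0`; in particular every point of the zero
level set of `C` satisfies the no-liability condition `q ≺ 0`. -/
theorem statement19 (α : ℝ) (hα : 0 < α) (C : (Fin 2 → ℝ) → ℝ)
    (hC : ∀ q : Fin 2 → ℝ,
      C q = (q 0 + q 1 + Real.sqrt (4 * α ^ 2 + (q 0 - q 1) ^ 2)) / 2) :
    (∀ q : Fin 2 → ℝ, C q = 0 ↔ (q 0 * q 1 = α ^ 2 ∧ q 0 < 0 ∧ q 1 < 0)) ∧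
    (∀ q : Fin 2 → ℝ, C q = 0 → q 0 < 0 ∧ q 1 < 0) := by
  have key : ∀ q : Fin 2 → ℝ, C q = 0 ↔ (q 0 * q 1 = α ^ 2 ∧ q 0 < 0 ∧ q 1 < 0) := by
    intro q
    rw [hC q]
    set a := q 0
    set b := q 1
    have hnn : (0:ℝ) ≤ 4 * α ^ 2 + (a - b) ^ 2 := by positivity
    constructor
    · intro h
      have hs : Real.sqrt (4 * α ^ 2 + (a - b) ^ 2) = -(a + b) := by linarith
      have hsq : 4 * α ^ 2 + (a - b) ^ 2 = (a + b) ^ 2 := by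
        have := Real.sq_sqrt hnn
        rw [hs] at this; nlinarith [this]
      have hprod : a * b = α ^ 2 := by nlinarith
      have hspos : 0 < Real.sqrt (4 * α ^ 2 + (a - b) ^ 2) := by
        apply Real.sqrt_pos.mpr; positivity
      have hsum : a + b < 0 := by linarith [hs ▸ hspos]
      have hpos : 0 < a * b := by rw [hprod]; positivity
      have ha : a < 0 := by nlinarith
      have hb : b < 0 := by nlinarith
      exact ⟨hprod, ha, hb⟩
    · rintro ⟨hprod, ha, hb⟩
      have h1 : 4 * α ^ 2 + (a - b) ^ 2 = (a + b) ^ 2 := by nlinarith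
      have : Real.sqrt (4 * α ^ 2 + (a - b) ^ 2) = -(a + b) := by
        rw [h1, show (a+b)^2 = (-(a+b))^2 by ring, Real.sqrt_sq (by linarith)]
      rw [this]; ring
  exact ⟨key, fun q h => ((key q).mp h).2⟩
end
end
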